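/- If φ : G → G is a graph automorphism of a finite simple graph G with adjacency matrix A, then for every vertex v, the (v,v) entry of |A| equals the (φ(v),φ(v)) entry of |A|. In particular, vertex energy is invariant under graph automorphisms. -/

import Mathlib

/-! Relabelling vertices by an automorphism `φ` fixes `A`, so relabelling `|A|` by `φ` gives another
positive semidefinite square root of `A²`. By uniqueness of such roots it is `|A|` itself. -/

theorem SimpleGraph.adjMatrix_submatrix_iso {V W α : Type*} [Zero α] [One α]
    {G : SimpleGraph V} {H : SimpleGraph W} [DecidableRel G.Adj] [DecidableRel H.Adj]
    (φ : G ≃g H) : (H.adjMatrix α).submatrix φ φ = G.adjMatrix α := by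
  ext i j
  simp only [Matrix.submatrix_apply, SimpleGraph.adjMatrix_apply, φ.map_adj_iff]

namespace Matrix

open scoped ComplexOrder

variable {n 𝕜 : Type*} [Fintype n] [DecidableEq n] [RCLike 𝕜]

open scoped MatrixOrder in
theorem PosSemidef.eq_of_mul_self_eq {B C : Matrix n n 𝕜} (hB : B.PosSemidef) (hC : C.PosSemidef)
    (h : B * B = C * C) : B = C :=
  (CFC.sq_eq_sq_iff B C hB.nonneg hC.nonneg).mp (by rw [sq, sq, h])

theorem PosSemidef.submatrix_equiv_eq_self {B : Matrix n n 𝕜} (hB : B.PosSemidef) (e : n ≃ n)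
    (he : (B * B).submatrix e e = B * B) : B.submatrix e e = B :=
  (hB.submatrix e).eq_of_mul_self_eq hB (by rw [submatrix_mul_equiv, he])

end Matrix

theorem vertex_energy_invariant_under_automorphism {V : Type*} [Fintype V] [DecidableEq V]
    (G : SimpleGraph V) [DecidableRel G.Adj] (φ : G ≃g G)
    (B : Matrix V V ℝ) (hB : B.PosSemidef) (hBB : B * B = G.adjMatrix ℝ ^ 2) :
    ∀ v, B v v = B (φ v) (φ v) := by
  have hA : (G.adjMatrix ℝ * G.adjMatrix ℝ).submatrix φ.toEquiv φ.toEquiv =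
      G.adjMatrix ℝ * G.adjMatrix ℝ := by
    rw [← Matrix.submatrix_mul_equiv _ _ _ φ.toEquiv]
    exact congrArg₂ (· * ·) (G.adjMatrix_submatrix_iso φ) (G.adjMatrix_submatrix_iso φ)
  have hφB : B.submatrix φ φ = B :=
    hB.submatrix_equiv_eq_self φ.toEquiv (by rw [hBB, sq, hA])
  intro v
  exact (congrFun₂ hφB v v).symm
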